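/- arXiv:2602.22211 — 4 statements merged into one kernel-verified Lean document; each statement's English description precedes it below -/
import Mathlib

section
/- In the concatenated iceberg code, the product of X operators on the four corner qubits of the grid, X_{0,0} X_{n₁-1,0} X_{0,n₂-1} X_{n₁-1,n₂-1}, commutes with all Z-type stabilizers (rows and column pairs) and anticommutes with every logical operator Z̄^{i,j} = Z_{i,j} Z_{n₁-1,j} Z_{i,n₂-1} Z_{n₁-1,n₂-1} (for 1 ≤ i ≤ n₁-2, 1 ≤ j ≤ n₂-2); hence it equals the product of all logical X operators ∏ X̄^{i,j} up to stabilizers. -/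
/-- `F₂` indicator vector of a finite set of grid qubits. -/
def ind {α : Type*} [DecidableEq α] (s : Finset α) : α → ZMod 2 :=
  fun a => if a ∈ s then 1 else 0

/-- Symplectic pairing: an X-type Pauli with support vector `f` commutes with a
Z-type Pauli with support vector `g` iff `dot f g = 0`, and anticommutes iff
`dot f g = 1`. -/
def dotF2 {α : Type*} [Fintype α] (f g : α → ZMod 2) : ZMod 2 :=
  ∑ a, f a * g a

section
variable (k₁ k₂ : ℕ)

/-- Support of the four-corner operator `X_{0,0} X_{n₁-1,0} X_{0,n₂-1} X_{n₁-1,n₂-1}`. -/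
def corners : Fin (k₁ + 2) × Fin (k₂ + 2) → ZMod 2 :=
  ind {(0, 0), (Fin.last (k₁ + 1), 0), (0, Fin.last (k₂ + 1)),
       (Fin.last (k₁ + 1), Fin.last (k₂ + 1))}

/-- Support of the row stabilizer `∏_x Z_{x,r}` (or `∏_x X_{x,r}`). -/
def rowStab (r : Fin (k₂ + 2)) : Fin (k₁ + 2) × Fin (k₂ + 2) → ZMod 2 :=
  ind (Finset.univ.filter fun p => p.2 = r)

/-- Support of the column-pair stabilizer `∏_y Z_{c,y} Z_{n₁-1,y}`. -/
def colPairStab (c : Fin (k₁ + 2)) : Fin (k₁ + 2) × Fin (k₂ + 2) → ZMod 2 :=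
  ind (Finset.univ.filter fun p => p.1 = c ∨ p.1 = Fin.last (k₁ + 1))

/-- Support of the logical operator
`Z̄^{i,j} = Z_{i,j} Z_{n₁-1,j} Z_{i,n₂-1} Z_{n₁-1,n₂-1}`. -/
def zRect (i : Fin (k₁ + 2)) (j : Fin (k₂ + 2)) :
    Fin (k₁ + 2) × Fin (k₂ + 2) → ZMod 2 :=
  ind {(i, j), (Fin.last (k₁ + 1), j), (i, Fin.last (k₂ + 1)),
       (Fin.last (k₁ + 1), Fin.last (k₂ + 1))}

/-- Support of the logical operator `X̄^{i,j} = X_{0,0} X_{i,0} X_{0,j} X_{i,j}`. -/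
def xRect (i : Fin (k₁ + 2)) (j : Fin (k₂ + 2)) :
    Fin (k₁ + 2) × Fin (k₂ + 2) → ZMod 2 :=
  ind {(0, 0), (i, 0), (0, j), (i, j)}

end

lemma dot_ind' {α : Type*} [Fintype α] [DecidableEq α] (s : Finset α) (g : α → ZMod 2) :
    dotF2 (ind s) g = ∑ a ∈ s, g a := by
  unfold dotF2 ind
  simp [ite_mul, Finset.sum_ite_mem]

lemma dot_corners' (k₁ k₂ : ℕ) (g : Fin (k₁ + 2) × Fin (k₂ + 2) → ZMod 2) :
    dotF2 (corners k₁ k₂) g = g (0,0) + g (Fin.last (k₁ + 1), 0)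
      + g (0, Fin.last (k₂ + 1)) + g (Fin.last (k₁ + 1), Fin.last (k₂ + 1)) := by
  rw [corners, dot_ind',
      Finset.sum_insert (by simp [Prod.ext_iff, Fin.ext_iff]),
      Finset.sum_insert (by simp [Prod.ext_iff, Fin.ext_iff]),
      Finset.sum_insert (by simp [Prod.ext_iff, Fin.ext_iff]),
      Finset.sum_singleton]
  ring

/-- interior column indices -/
def midSet (k : ℕ) : Finset (Fin (k + 2)) :=
  Finset.univ.filter fun c => 1 ≤ c.val ∧ c.val ≤ k

lemma card_midSet (k : ℕ) : (midSet k).card = k := by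
  have h : midSet k = Finset.Icc (⟨1, by omega⟩ : Fin (k+2)) ⟨k, by omega⟩ := by
    ext c
    simp [midSet, Fin.le_def]
  rw [h, Fin.card_Icc]
  simp

lemma even_cast_zero {n : ℕ} (h : Even n) : (n : ZMod 2) = 0 :=
  (ZMod.natCast_eq_zero_iff n 2).mpr h.two_dvd

lemma sum_xRect_eval (k₁ k₂ : ℕ) (hk₁ : Even k₁) (hk₂ : Even k₂)
    (x : Fin (k₁+2)) (y : Fin (k₂+2)) :
    (∑ i : Fin (k₁ + 2), ∑ j : Fin (k₂ + 2),
        (if 1 ≤ i.val ∧ i.val ≤ k₁ ∧ 1 ≤ j.val ∧ j.val ≤ k₂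
          then xRect k₁ k₂ i j else 0)) (x, y)
      = if 1 ≤ x.val ∧ x.val ≤ k₁ ∧ 1 ≤ y.val ∧ y.val ≤ k₂ then 1 else 0 := by
  simp only [Finset.sum_apply, apply_ite (fun f : Fin (k₁ + 2) × Fin (k₂ + 2) → ZMod 2 => f (x, y)),
    Pi.zero_apply, xRect, ind, ← ite_and]
  rw [← Finset.sum_product']
  rw [Finset.sum_boole]
  have hx2 : x.val < k₁ + 2 := x.isLt
  have hy2 : y.val < k₂ + 2 := y.isLt
  -- the filtered set
  by_cases hx1 : 1 ≤ x.val ∧ x.val ≤ k₁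
  · by_cases hy1 : 1 ≤ y.val ∧ y.val ≤ k₂
    · -- interior : singleton
      have hset : ((Finset.univ ×ˢ Finset.univ).filter fun p : Fin (k₁+2) × Fin (k₂+2) =>
          (1 ≤ p.1.val ∧ p.1.val ≤ k₁ ∧ 1 ≤ p.2.val ∧ p.2.val ≤ k₂) ∧
            (x, y) ∈ ({(0, 0), (p.1, 0), (0, p.2), (p.1, p.2)} :
              Finset (Fin (k₁+2) × Fin (k₂+2)))) = {(x, y)} := by
        ext ⟨i, j⟩
        simp only [Finset.mem_filter, Finset.mem_product, Finset.mem_univ, true_and,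
          Finset.mem_insert, Finset.mem_singleton, Prod.mk.injEq, Fin.ext_iff,
          Fin.val_zero]
        constructor
        · rintro ⟨hc, hm⟩; omega
        · rintro ⟨hi, hj⟩; omega
      rw [hset]
      simp [hx1, hy1]
    · -- x interior, y boundary
      rcases (by omega : y.val = 0 ∨ y.val = k₂ + 1) with hy | hy
      · have hset : ((Finset.univ ×ˢ Finset.univ).filter fun p : Fin (k₁+2) × Fin (k₂+2) =>
            (1 ≤ p.1.val ∧ p.1.val ≤ k₁ ∧ 1 ≤ p.2.val ∧ p.2.val ≤ k₂) ∧
              (x, y) ∈ ({(0, 0), (p.1, 0), (0, p.2), (p.1, p.2)} :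
                Finset (Fin (k₁+2) × Fin (k₂+2)))) = {x} ×ˢ midSet k₂ := by
          ext ⟨i, j⟩
          simp only [Finset.mem_filter, Finset.mem_product, Finset.mem_univ, true_and,
            Finset.mem_insert, Finset.mem_singleton, Prod.mk.injEq, Fin.ext_iff,
            Fin.val_zero, midSet]
          constructor
          · rintro ⟨hc, hm⟩; omega
          · rintro ⟨hi, hj⟩; omega
        rw [hset, if_neg (by omega), Finset.card_product, Finset.card_singleton,
          card_midSet, one_mul, even_cast_zero hk₂]
      · have hset : ((Finset.univ ×ˢ Finset.univ).filter fun p : Fin (k₁+2) × Fin (k₂+2) =>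
            (1 ≤ p.1.val ∧ p.1.val ≤ k₁ ∧ 1 ≤ p.2.val ∧ p.2.val ≤ k₂) ∧
              (x, y) ∈ ({(0, 0), (p.1, 0), (0, p.2), (p.1, p.2)} :
                Finset (Fin (k₁+2) × Fin (k₂+2)))) = ∅ := by
          ext ⟨i, j⟩
          simp only [Finset.mem_filter, Finset.mem_product, Finset.mem_univ, true_and,
            Finset.mem_insert, Finset.mem_singleton, Prod.mk.injEq, Fin.ext_iff,
            Fin.val_zero, Finset.notMem_empty, iff_false, not_and]
          rintro hc hm; omega
        rw [hset, if_neg (by omega), Finset.card_empty, Nat.cast_zero]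
  · -- x boundary
    rcases (by omega : x.val = 0 ∨ x.val = k₁ + 1) with hx | hx
    · by_cases hy1 : 1 ≤ y.val ∧ y.val ≤ k₂
      · have hset : ((Finset.univ ×ˢ Finset.univ).filter fun p : Fin (k₁+2) × Fin (k₂+2) =>
            (1 ≤ p.1.val ∧ p.1.val ≤ k₁ ∧ 1 ≤ p.2.val ∧ p.2.val ≤ k₂) ∧
              (x, y) ∈ ({(0, 0), (p.1, 0), (0, p.2), (p.1, p.2)} :
                Finset (Fin (k₁+2) × Fin (k₂+2)))) = midSet k₁ ×ˢ {y} := by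
          ext ⟨i, j⟩
          simp only [Finset.mem_filter, Finset.mem_product, Finset.mem_univ, true_and,
            Finset.mem_insert, Finset.mem_singleton, Prod.mk.injEq, Fin.ext_iff,
            Fin.val_zero, midSet]
          constructor
          · rintro ⟨hc, hm⟩; omega
          · rintro ⟨hi, hj⟩; omega
        rw [hset, if_neg (by omega), Finset.card_product, Finset.card_singleton,
          card_midSet, mul_one, even_cast_zero hk₁]
      · rcases (by omega : y.val = 0 ∨ y.val = k₂ + 1) with hy | hy
        · have hset : ((Finset.univ ×ˢ Finset.univ).filter fun p : Fin (k₁+2) × Fin (k₂+2) =>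
              (1 ≤ p.1.val ∧ p.1.val ≤ k₁ ∧ 1 ≤ p.2.val ∧ p.2.val ≤ k₂) ∧
                (x, y) ∈ ({(0, 0), (p.1, 0), (0, p.2), (p.1, p.2)} :
                  Finset (Fin (k₁+2) × Fin (k₂+2)))) = midSet k₁ ×ˢ midSet k₂ := by
            ext ⟨i, j⟩
            simp only [Finset.mem_filter, Finset.mem_product, Finset.mem_univ, true_and,
              Finset.mem_insert, Finset.mem_singleton, Prod.mk.injEq, Fin.ext_iff,
              Fin.val_zero, midSet]
            constructor
            · rintro ⟨hc, hm⟩; omega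
            · rintro ⟨hi, hj⟩; omega
          rw [hset, if_neg (by omega), Finset.card_product, card_midSet, card_midSet,
            even_cast_zero (hk₁.mul_right k₂)]
        · have hset : ((Finset.univ ×ˢ Finset.univ).filter fun p : Fin (k₁+2) × Fin (k₂+2) =>
              (1 ≤ p.1.val ∧ p.1.val ≤ k₁ ∧ 1 ≤ p.2.val ∧ p.2.val ≤ k₂) ∧
                (x, y) ∈ ({(0, 0), (p.1, 0), (0, p.2), (p.1, p.2)} :
                  Finset (Fin (k₁+2) × Fin (k₂+2)))) = ∅ := by
            ext ⟨i, j⟩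
            simp only [Finset.mem_filter, Finset.mem_product, Finset.mem_univ, true_and,
              Finset.mem_insert, Finset.mem_singleton, Prod.mk.injEq, Fin.ext_iff,
              Fin.val_zero, Finset.notMem_empty, iff_false, not_and]
            rintro hc hm; omega
          rw [hset, if_neg (by omega), Finset.card_empty, Nat.cast_zero]
    · have hset : ((Finset.univ ×ˢ Finset.univ).filter fun p : Fin (k₁+2) × Fin (k₂+2) =>
          (1 ≤ p.1.val ∧ p.1.val ≤ k₁ ∧ 1 ≤ p.2.val ∧ p.2.val ≤ k₂) ∧
            (x, y) ∈ ({(0, 0), (p.1, 0), (0, p.2), (p.1, p.2)} :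
              Finset (Fin (k₁+2) × Fin (k₂+2)))) = ∅ := by
        ext ⟨i, j⟩
        simp only [Finset.mem_filter, Finset.mem_product, Finset.mem_univ, true_and,
          Finset.mem_insert, Finset.mem_singleton, Prod.mk.injEq, Fin.ext_iff,
          Fin.val_zero, Finset.notMem_empty, iff_false, not_and]
        rintro hc hm; omega
      rw [hset, if_neg (by omega), Finset.card_empty, Nat.cast_zero]

lemma colsum_eval (k₁ k₂ : ℕ) (hk₁ : Even k₁) (x : Fin (k₁+2)) (y : Fin (k₂+2)) :
    (∑ c ∈ midSet k₁, colPairStab k₁ k₂ c) (x, y)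
      = if 1 ≤ x.val ∧ x.val ≤ k₁ then 1 else 0 := by
  simp only [Finset.sum_apply, colPairStab, ind, Finset.mem_filter, Finset.mem_univ, true_and]
  rw [Finset.sum_boole]
  by_cases hx1 : 1 ≤ x.val ∧ x.val ≤ k₁
  · have hset : ((midSet k₁).filter fun c => x = c ∨ x = Fin.last (k₁+1)) = {x} := by
      ext c
      simp only [midSet, Finset.mem_filter, Finset.mem_univ, true_and,
        Finset.mem_singleton, Fin.ext_iff, Fin.val_last]
      omega
    rw [hset, if_pos hx1, Finset.card_singleton, Nat.cast_one]
  · rcases (by omega : x.val = 0 ∨ x.val = k₁ + 1) with hx | hx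
    · have hset : ((midSet k₁).filter fun c => x = c ∨ x = Fin.last (k₁+1)) = ∅ := by
        ext c
        simp only [midSet, Finset.mem_filter, Finset.mem_univ, true_and,
          Finset.notMem_empty, iff_false, not_and, Fin.ext_iff, Fin.val_last]
        omega
      rw [hset, if_neg (by omega), Finset.card_empty, Nat.cast_zero]
    · have hset : ((midSet k₁).filter fun c => x = c ∨ x = Fin.last (k₁+1)) = midSet k₁ := by
        ext c
        simp only [midSet, Finset.mem_filter, Finset.mem_univ, true_and,
          Fin.ext_iff, Fin.val_last]
        omega
      rw [hset, if_neg (by omega), card_midSet, even_cast_zero hk₁]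

lemma main_eq (k₁ k₂ : ℕ) (hk₁ : Even k₁) (hk₂ : Even k₂) :
    corners k₁ k₂ + ∑ i : Fin (k₁+2), ∑ j : Fin (k₂+2),
        (if 1 ≤ i.val ∧ i.val ≤ k₁ ∧ 1 ≤ j.val ∧ j.val ≤ k₂ then xRect k₁ k₂ i j else 0)
      = rowStab k₁ k₂ 0 + rowStab k₁ k₂ (Fin.last (k₂+1))
          + ∑ c ∈ midSet k₁, colPairStab k₁ k₂ c := by
  funext p
  obtain ⟨x, y⟩ := p
  simp only [Pi.add_apply]
  rw [sum_xRect_eval k₁ k₂ hk₁ hk₂ x y, colsum_eval k₁ k₂ hk₁ x y]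
  simp only [corners, rowStab, ind, Finset.mem_filter, Finset.mem_univ, true_and,
    Finset.mem_insert, Finset.mem_singleton, Prod.mk.injEq, Fin.ext_iff, Fin.val_zero,
    Fin.val_last]
  have hx2 : x.val < k₁ + 2 := x.isLt
  have hy2 : y.val < k₂ + 2 := y.isLt
  split_ifs <;>
    first
      | decide
      | (exfalso;
         simp -failIfUnchanged only [false_and, and_false, or_false, false_or, true_and, and_true,
           true_or, or_true, not_true, not_false_iff] at *;
         all_goals omega)

/-- In the concatenated iceberg code, the four-corner operator
`X_{0,0} X_{n₁-1,0} X_{0,n₂-1} X_{n₁-1,n₂-1}` commutes with all Z-type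
stabilizers (rows and column pairs), anticommutes with every logical operator
`Z̄^{i,j}` (`1 ≤ i ≤ k₁`, `1 ≤ j ≤ k₂`), and hence equals the product of all
logical X operators `∏_{i,j} X̄^{i,j}` up to stabilizers: their `F₂` difference
lies in the subgroup generated by the X-type stabilizer supports. -/
theorem corners_equal_product_of_logical_X (k₁ k₂ : ℕ)
    (hk₁ : Even k₁) (hk₂ : Even k₂) :
    (∀ r : Fin (k₂ + 2), dotF2 (corners k₁ k₂) (rowStab k₁ k₂ r) = 0) ∧
    (∀ c : Fin (k₁ + 2), 1 ≤ c.val → c.val ≤ k₁ →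
      dotF2 (corners k₁ k₂) (colPairStab k₁ k₂ c) = 0) ∧
    (∀ (i : Fin (k₁ + 2)) (j : Fin (k₂ + 2)),
      1 ≤ i.val → i.val ≤ k₁ → 1 ≤ j.val → j.val ≤ k₂ →
      dotF2 (corners k₁ k₂) (zRect k₁ k₂ i j) = 1) ∧
    (corners k₁ k₂ +
        ∑ i : Fin (k₁ + 2), ∑ j : Fin (k₂ + 2),
          (if 1 ≤ i.val ∧ i.val ≤ k₁ ∧ 1 ≤ j.val ∧ j.val ≤ k₂
            then xRect k₁ k₂ i j else 0) ∈
      AddSubgroup.closure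
        ({f | ∃ r : Fin (k₂ + 2), f = rowStab k₁ k₂ r} ∪
         {f | ∃ c : Fin (k₁ + 2), 1 ≤ c.val ∧ c.val ≤ k₁ ∧ f = colPairStab k₁ k₂ c})) := by
  refine ⟨?_, ?_, ?_, ?_⟩
  · intro r
    rw [dot_corners']
    simp only [rowStab, ind, Finset.mem_filter, Finset.mem_univ, true_and]
    split_ifs <;> decide
  · intro c _ _
    rw [dot_corners']
    simp only [colPairStab, ind, Finset.mem_filter, Finset.mem_univ, true_and]
    split_ifs <;> decide
  · intro i j h1 h2 h3 h4
    rw [dot_corners']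
    simp only [zRect, ind, Finset.mem_insert, Finset.mem_singleton, Prod.mk.injEq,
      Fin.ext_iff, Fin.val_last, Fin.val_zero]
    split_ifs <;>
      first
        | decide
        | (exfalso;
           simp only [false_and, and_false, or_false, false_or, true_and, and_true,
             true_or, or_true, not_true, not_false_iff] at *;
           all_goals omega)
  · rw [main_eq k₁ k₂ hk₁ hk₂]
    refine AddSubgroup.add_mem _ (AddSubgroup.add_mem _ ?_ ?_) ?_
    · exact AddSubgroup.subset_closure (Set.mem_union_left _ ⟨0, rfl⟩)
    · exact AddSubgroup.subset_closure (Set.mem_union_left _ ⟨Fin.last (k₂+1), rfl⟩)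
    · refine AddSubgroup.sum_mem _ fun c hc => ?_
      obtain ⟨-, h1, h2⟩ := Finset.mem_filter.mp hc
      exact AddSubgroup.subset_closure (Set.mem_union_right _ ⟨c, h1, h2, rfl⟩)
end

section
/- The logical GHZ state of the iceberg code I_k equals the tensor product (after reordering of qubits) of a Bell pair on qubits 0 and n−1 with a physical (n−2)-qubit GHZ state on qubits 1,…,n−2: |GHZ̄_k⟩ = |Φ⟩_{0,n−1} ⊗ |GHZ_{n−2}⟩. -/
/-- `F₂` indicator vector of the single qubit with index `a` among the
`n = k + 2` qubits of the iceberg code. -/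
def site (k a : ℕ) : Fin (k + 2) → ZMod 2 := fun i => if i.val = a then 1 else 0

/-- Generators (Paulis modulo phase, as pairs (X-support, Z-support) over `F₂`)
of the stabilizer group of the logical GHZ state of the iceberg code `I_k`:
the code stabilizers `X^{⊗n}`, `Z^{⊗n}`, the product of all logical X operators
`∏_{j=1}^k X̄^j = ∏_{j=1}^k X_0 X_j`, and the pairwise products
`Z̄^j Z̄^{j+1} = Z_j Z_{j+1}` for `1 ≤ j ≤ k - 1`. -/
def logicalGHZGens (k : ℕ) : Set ((Fin (k + 2) → ZMod 2) × (Fin (k + 2) → ZMod 2)) :=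
  {((fun _ => 1), 0), (0, (fun _ => 1)),
   (∑ j ∈ Finset.Icc 1 k, (site k 0 + site k j), 0)}
    ∪ {p | ∃ j ∈ Finset.Icc 1 (k - 1), p = (0, site k j + site k (j + 1))}

/-- Generators of the stabilizer group of `|Φ⟩_{0,n-1} ⊗ |GHZ_{n-2}⟩`:
the Bell pair stabilizers `X_0 X_{n-1}`, `Z_0 Z_{n-1}` on qubits `0, n-1`, and
the GHZ stabilizers `X_1 ⋯ X_{n-2}` and `Z_i Z_{i+1}` (`1 ≤ i ≤ n - 3`) on
qubits `1, …, n-2`. -/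
def bellTimesGHZGens (k : ℕ) : Set ((Fin (k + 2) → ZMod 2) × (Fin (k + 2) → ZMod 2)) :=
  {(site k 0 + site k (k + 1), 0), (0, site k 0 + site k (k + 1)),
   (∑ j ∈ Finset.Icc 1 k, site k j, 0)}
    ∪ {p | ∃ i ∈ Finset.Icc 1 (k - 1), p = (0, site k i + site k (i + 1))}

/-! ### Auxiliary lemmas -/

/-- The common "pairwise Z" generators. -/
def pairSet (k : ℕ) : Set ((Fin (k + 2) → ZMod 2) × (Fin (k + 2) → ZMod 2)) :=
  {p | ∃ j ∈ Finset.Icc 1 (k - 1), p = (0, site k j + site k (j + 1))}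

lemma zmod2_add_self : ∀ a : ZMod 2, a + a = 0 := by decide

lemma fun_add_self (k : ℕ) (f : Fin (k + 2) → ZMod 2) : f + f = 0 := by
  funext i
  exact zmod2_add_self (f i)

lemma pairSet_subset_logical (k : ℕ) : pairSet k ⊆ logicalGHZGens k := by
  intro p hp
  exact Set.mem_union_right _ hp

lemma pairSet_subset_bell (k : ℕ) : pairSet k ⊆ bellTimesGHZGens k := by
  intro p hp
  exact Set.mem_union_right _ hp

lemma sum_mem_pair (k m : ℕ) (h : 2 * m ≤ k) :
    (((0 : Fin (k + 2) → ZMod 2), ∑ j ∈ Finset.Icc 1 (2 * m), site k j))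
      ∈ AddSubgroup.closure (pairSet k) := by
  induction m with
  | zero =>
    have h0 : (((0 : Fin (k + 2) → ZMod 2), ∑ j ∈ Finset.Icc 1 (2 * 0), site k j))
        = (0 : (Fin (k + 2) → ZMod 2) × (Fin (k + 2) → ZMod 2)) := by simp
    rw [h0]
    exact zero_mem _
  | succ m ih =>
    have h' : 2 * m ≤ k := by omega
    have e1 : Finset.Icc 1 (2 * (m + 1)) =
        insert (2 * m + 2) (insert (2 * m + 1) (Finset.Icc 1 (2 * m))) := by
      ext x
      simp only [Finset.mem_Icc, Finset.mem_insert]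
      omega
    have h2 : (2 * m + 2) ∉ insert (2 * m + 1) (Finset.Icc 1 (2 * m)) := by
      simp only [Finset.mem_insert, Finset.mem_Icc]
      omega
    have h3 : (2 * m + 1) ∉ Finset.Icc 1 (2 * m) := by
      simp only [Finset.mem_Icc]
      omega
    rw [e1, Finset.sum_insert h2, Finset.sum_insert h3]
    have hp : ((0 : Fin (k + 2) → ZMod 2), site k (2 * m + 1) + site k (2 * m + 1 + 1))
        ∈ pairSet k := by
      refine ⟨2 * m + 1, ?_, rfl⟩
      simp only [Finset.mem_Icc]
      omega
    have hmem := AddSubgroup.subset_closure hp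
    have key : ((0 : Fin (k + 2) → ZMod 2),
        site k (2 * m + 2) + (site k (2 * m + 1) + ∑ j ∈ Finset.Icc 1 (2 * m), site k j))
        = ((0 : Fin (k + 2) → ZMod 2), site k (2 * m + 1) + site k (2 * m + 1 + 1))
          + ((0 : Fin (k + 2) → ZMod 2), ∑ j ∈ Finset.Icc 1 (2 * m), site k j) := by
      have : (2 * m + 1 + 1) = 2 * m + 2 := by omega
      rw [this, Prod.mk_add_mk]
      refine Prod.ext (by simp) ?_
      simp only
      abel
    rw [key]
    exact add_mem hmem (ih h')

lemma sum_site_apply (k n : ℕ) (i : Fin (k + 2)) :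
    (∑ j ∈ Finset.Icc 1 n, site k j) i = if i.val ∈ Finset.Icc 1 n then 1 else 0 := by
  rw [Finset.sum_apply]
  simp only [site]
  exact Finset.sum_ite_eq (Finset.Icc 1 n) i.val (fun _ => (1 : ZMod 2))

lemma ones_eq (k : ℕ) :
    (fun _ : Fin (k + 2) => (1 : ZMod 2)) =
      (site k 0 + site k (k + 1)) + ∑ j ∈ Finset.Icc 1 k, site k j := by
  funext i
  have hi := i.isLt
  simp only [Pi.add_apply, site, sum_site_apply, Finset.mem_Icc]
  split_ifs <;> first | rfl | decide | omega

lemma genX_eq (k m : ℕ) (hm : k = m + m) :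
    ∑ j ∈ Finset.Icc 1 k, (site k 0 + site k j) = ∑ j ∈ Finset.Icc 1 k, site k j := by
  rw [Finset.sum_add_distrib, Finset.sum_const, Nat.card_Icc, Nat.add_sub_cancel]
  have h0 : k • (site k 0) = 0 := by
    funext i
    rw [Pi.smul_apply, nsmul_eq_mul]
    have hc : ((k : ℕ) : ZMod 2) = 0 := by
      subst hm
      push_cast
      exact zmod2_add_self _
    rw [hc, zero_mul, Pi.zero_apply]
  rw [h0, zero_add]

/-- The logical GHZ state of the iceberg code `I_k` factorizes (after reordering)
as a Bell pair on qubits `0, n-1` tensored with a physical `(n-2)`-qubit GHZ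
state on qubits `1, …, n-2`: the two stabilizer groups coincide. -/
theorem logical_ghz_is_bell_times_ghz (k : ℕ) (hk : Even k) :
    AddSubgroup.closure (logicalGHZGens k) =
      AddSubgroup.closure (bellTimesGHZGens k) := by
  obtain ⟨m, hm⟩ := hk
  -- abbreviations
  set C : Fin (k + 2) → ZMod 2 := site k 0 + site k (k + 1) with hC
  set B : Fin (k + 2) → ZMod 2 := ∑ j ∈ Finset.Icc 1 k, site k j with hB
  have hones : (fun _ : Fin (k + 2) => (1 : ZMod 2)) = C + B := ones_eq k
  have hCeq : C = (fun _ : Fin (k + 2) => (1 : ZMod 2)) + B := by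
    rw [hones, add_assoc, fun_add_self, add_zero]
  have hX : ∑ j ∈ Finset.Icc 1 k, (site k 0 + site k j) = B := genX_eq k m hm
  have hBpair : ((0 : Fin (k + 2) → ZMod 2), B) ∈ AddSubgroup.closure (pairSet k) := by
    have := sum_mem_pair k m (by omega)
    rwa [show 2 * m = k by omega] at this
  apply le_antisymm
  · rw [AddSubgroup.closure_le]
    intro p hp
    simp only [logicalGHZGens, Set.mem_union, Set.mem_insert_iff,
      Set.mem_singleton_iff, Set.mem_setOf_eq] at hp
    rcases hp with ((rfl | rfl | rfl) | ⟨j, hj, rfl⟩)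
    · -- (all ones, 0) = (C, 0) + (B, 0)
      have : ((fun _ : Fin (k + 2) => (1 : ZMod 2)), (0 : Fin (k + 2) → ZMod 2))
          = (C, (0 : Fin (k + 2) → ZMod 2)) + (B, (0 : Fin (k + 2) → ZMod 2)) := by
        rw [Prod.mk_add_mk, add_zero, hones]
      rw [this]
      refine add_mem (AddSubgroup.subset_closure ?_) (AddSubgroup.subset_closure ?_)
      · exact Set.mem_union_left _ (by left; rfl)
      · exact Set.mem_union_left _ (by right; right; rfl)
    · -- (0, all ones) = (0, C) + (0, B)
      have : ((0 : Fin (k + 2) → ZMod 2), (fun _ : Fin (k + 2) => (1 : ZMod 2)))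
          = ((0 : Fin (k + 2) → ZMod 2), C) + ((0 : Fin (k + 2) → ZMod 2), B) := by
        rw [Prod.mk_add_mk, add_zero, hones]
      rw [this]
      refine add_mem (AddSubgroup.subset_closure ?_) ?_
      · exact Set.mem_union_left _ (by right; left; rfl)
      · exact AddSubgroup.closure_mono (pairSet_subset_bell k) hBpair
    · rw [hX]
      exact AddSubgroup.subset_closure (Set.mem_union_left _ (by right; right; rfl))
    · exact AddSubgroup.subset_closure (pairSet_subset_bell k ⟨j, hj, rfl⟩)
  · rw [AddSubgroup.closure_le]
    intro p hp
    simp only [bellTimesGHZGens, Set.mem_union, Set.mem_insert_iff,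
      Set.mem_singleton_iff, Set.mem_setOf_eq] at hp
    have hBX : (B, (0 : Fin (k + 2) → ZMod 2)) ∈ AddSubgroup.closure (logicalGHZGens k) := by
      refine AddSubgroup.subset_closure (Set.mem_union_left _ ?_)
      right; right
      show (B, (0 : Fin (k + 2) → ZMod 2)) = (∑ j ∈ Finset.Icc 1 k, (site k 0 + site k j), 0)
      rw [hX]
    rcases hp with ((rfl | rfl | rfl) | ⟨j, hj, rfl⟩)
    · -- (C, 0) = (all ones, 0) + (B, 0)
      have : (C, (0 : Fin (k + 2) → ZMod 2))
          = ((fun _ : Fin (k + 2) => (1 : ZMod 2)), (0 : Fin (k + 2) → ZMod 2))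
            + (B, (0 : Fin (k + 2) → ZMod 2)) := by
        rw [Prod.mk_add_mk, add_zero, hCeq]
      rw [this]
      refine add_mem (AddSubgroup.subset_closure (Set.mem_union_left _ (by left; rfl))) hBX
    · -- (0, C) = (0, all ones) + (0, B)
      have : ((0 : Fin (k + 2) → ZMod 2), C)
          = ((0 : Fin (k + 2) → ZMod 2), (fun _ : Fin (k + 2) => (1 : ZMod 2)))
            + ((0 : Fin (k + 2) → ZMod 2), B) := by
        rw [Prod.mk_add_mk, add_zero, hCeq]
      rw [this]
      refine add_mem (AddSubgroup.subset_closure (Set.mem_union_left _ (by right; left; rfl)))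
        (AddSubgroup.closure_mono (pairSet_subset_logical k) hBpair)
    · exact hBX
    · exact AddSubgroup.subset_closure (pairSet_subset_logical k ⟨j, hj, rfl⟩)
end

section
/- If every extended rectangle in a computation contains at most two faults, and a QEC cycle with two internal faults on an error-free input either halts or outputs a generalized-weight ≤ 2 error, a cycle with one internal fault on a generalized-weight ≤ 1 input either outputs generalized-weight ≤ 1 or causes the next cycle to halt, and a faultless cycle corrects generalized-weight ≤ 1 inputs and halts on detectable weight-2 inputs, then the computation either halts or outputs an error of generalized weight at most 2 (no undetected logical error). -/
/-- The (possibly halted) error state after `i` QEC cycles: cycle `j` is the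
partial map `e ↦ f e (c j)` (`none` means the computation halts), starting from
the error-free state `e0`. -/
def runOpt {E : Type*} (f : E → ℕ → Option E) (e0 : E) (c : ℕ → ℕ) : ℕ → Option E
  | 0 => some e0
  | i + 1 => (runOpt f e0 c i).bind fun e => f e (c i)

/-- Distance-4 ExRec correctness.  `W₀ ⊆ W₁ ⊆ W₂ ⊆ E` are the errors of
generalized weight 0, ≤ 1, ≤ 2; `flagged` is the flag information passed to the
next cycle, which causes it to halt.  Hypotheses (Proposition 1 of the paper):
a faultless cycle corrects generalized-weight ≤ 1 inputs (clean unflagged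
output) and halts on detectable weight-2 inputs; a cycle with one internal
fault takes an error-free input to a generalized-weight ≤ 1 output, and a
generalized-weight ≤ 1 input either to a generalized-weight ≤ 1 output or to a
flagged (detectable, weight ≤ 2) output so that the next cycle halts; a cycle
with two internal faults on an error-free input either halts or outputs
generalized weight ≤ 2 (flagged if not weight ≤ 1).  If every extended
rectangle contains at most two faults (`c i + c (i+1) ≤ 2`, `c i ≤ 2`), then
starting error-free the computation either halts at some cycle or every
intermediate error state stays in `W₂` — no undetected logical error — and
moreover any state in `W₂ \ W₁` is immediately followed by a halt. -/
theorem exrec_distance_four {E : Type*} (W0 W1 W2 : Set E)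
    (flagged : E → Prop) (noerr : E) (f : E → ℕ → Option E)
    (h01 : W0 ⊆ W1) (h12 : W1 ⊆ W2) (hne : noerr ∈ W0)
    (h1 : ∀ e ∈ W1, ∀ e', f e 0 = some e' → e' ∈ W0 ∧ ¬ flagged e')
    (h1halt : ∀ e ∈ W2, e ∉ W1 → f e 0 = none)
    (hflag : ∀ e, flagged e → ∀ cnt, f e cnt = none)
    (h2a : ∀ e ∈ W0, ∀ e', f e 1 = some e' → e' ∈ W1)
    (h2b : ∀ e ∈ W1, ∀ e', f e 1 = some e' → e' ∈ W2 ∧ (e' ∈ W1 ∨ flagged e'))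
    (h3 : ∀ e ∈ W0, ∀ e', f e 2 = some e' → e' ∈ W2 ∧ (e' ∈ W1 ∨ flagged e'))
    (m : ℕ) (c : ℕ → ℕ)
    (hc : ∀ i < m, c i ≤ 2)
    (hEx : ∀ i, i + 1 < m → c i + c (i + 1) ≤ 2) :
    (∀ i ≤ m, ∀ e, runOpt f noerr c i = some e → e ∈ W2) ∧
    (∀ i < m, ∀ e, runOpt f noerr c i = some e → e ∉ W1 →
      runOpt f noerr c (i + 1) = none) := by
  have key : ∀ i ≤ m, ∀ e, runOpt f noerr c i = some e →
      e ∈ W2 ∧ (e ∉ W1 → flagged e) ∧ (e ∉ W0 → i < m → c i ≤ 1) := by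
    intro i
    induction i with
    | zero =>
      intro _ e he
      simp only [runOpt, Option.some.injEq] at he
      subst he
      exact ⟨h12 (h01 hne), fun h => absurd (h01 hne) h, fun h => absurd hne h⟩
    | succ i ih =>
      intro him e' he'
      have him' : i ≤ m := Nat.le_of_succ_le him
      simp only [runOpt, Option.bind_eq_some_iff] at he'
      obtain ⟨e, he, hf⟩ := he'
      obtain ⟨hW2, hflg, hcnt⟩ := ih him' e he
      by_cases hW1 : e ∈ W1
      · have hci : c i ≤ 2 := hc i (Nat.lt_of_succ_le him)
        interval_cases h : c i
        · -- faultless cycle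
          obtain ⟨h0, hnf⟩ := h1 e hW1 e' hf
          exact ⟨h12 (h01 h0), fun h => absurd (h01 h0) h, fun h => absurd h0 h⟩
        · -- one fault
          by_cases hW0 : e ∈ W0
          · have := h2a e hW0 e' hf
            refine ⟨h12 this, fun h => absurd this h, fun _ hlt => ?_⟩
            have := hEx i hlt; omega
          · obtain ⟨h2, hor⟩ := h2b e hW1 e' hf
            refine ⟨h2, fun h => hor.resolve_left h, fun _ hlt => ?_⟩
            have := hEx i hlt; rw [h] at this; omega
        · -- two faults
          by_cases hW0 : e ∈ W0
          · obtain ⟨h2, hor⟩ := h3 e hW0 e' hf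
            refine ⟨h2, fun h => hor.resolve_left h, fun _ hlt => ?_⟩
            have := hEx i hlt; rw [h] at this; omega
          · have := hcnt hW0 (Nat.lt_of_succ_le him); omega
      · -- e ∉ W1: flagged, so the cycle halts — contradiction
        have := hflag e (hflg hW1) (c i)
        rw [this] at hf
        exact absurd hf (by simp)
  constructor
  · intro i hi e he
    exact (key i hi e he).1
  · intro i hi e he hW1
    have hflg := ((key i (Nat.le_of_lt hi) e he).2.1) hW1
    simp only [runOpt, he, Option.bind_eq_none_iff, Option.bind_some]
    exact hflag e hflg (c i)
end

section
/- The GHZ verification operator Ω = (1/3) P_Z + (2/3) · 2^{−(N−1)} Σ_{XY} P_{XY}, where P_Z projects onto span{|0…0⟩, |1…1⟩} and the P_{XY} project onto the +1 eigenspaces of the 2^{N−1} XY-type stabilizers of the N-qubit GHZ state, satisfies Ω = |GHZ⟩⟨GHZ| + (1/3)(I − |GHZ⟩⟨GHZ|). -/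
/-- The XY-type stabilizer of the `N`-qubit GHZ state with Pauli `Y` on the
qubits in `T` (with `|T|` even) and Pauli `X` elsewhere, including its sign
`(−1)^{|T|/2}`: on a computational basis state `|t⟩` it acts as
`(−1)^{#{i ∈ T : tᵢ = 1}} |t + 1̄⟩`.  Given as a matrix on the basis
`Fin N → Fin 2` of `(ℂ²)^{⊗N}`. -/
def xyStab (N : ℕ) (T : Finset (Fin N)) :
    Matrix (Fin N → Fin 2) (Fin N → Fin 2) ℂ :=
  fun s t => if s = (fun i => t i + 1)
    then (-1 : ℂ) ^ ((T.filter fun i => t i = 1).card) else 0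

/-- The projector `P_S = (I + S)/2` onto the `+1` eigenspace of the XY-type
stabilizer `S`. -/
noncomputable def xyProj (N : ℕ) (T : Finset (Fin N)) :
    Matrix (Fin N → Fin 2) (Fin N → Fin 2) ℂ :=
  (1 / 2 : ℂ) • (1 + xyStab N T)

/-- The projector `P_Z = |0…0⟩⟨0…0| + |1…1⟩⟨1…1|` onto `span{|0…0⟩, |1…1⟩}`. -/
def pZ (N : ℕ) : Matrix (Fin N → Fin 2) (Fin N → Fin 2) ℂ :=
  fun s t => if s = t ∧ ((∀ i, s i = 0) ∨ (∀ i, s i = 1)) then 1 else 0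

/-- The projector `|GHZ⟩⟨GHZ|` onto the `N`-qubit GHZ state
`(|0…0⟩ + |1…1⟩)/√2`. -/
noncomputable def ghzProj (N : ℕ) : Matrix (Fin N → Fin 2) (Fin N → Fin 2) ℂ :=
  fun s t => if ((∀ i, s i = 0) ∨ (∀ i, s i = 1)) ∧
      ((∀ i, t i = 0) ∨ (∀ i, t i = 1)) then (1 / 2 : ℂ) else 0

lemma fin2cases (x : Fin 2) : x = 0 ∨ x = 1 := by omega

lemma par (c c' : ℕ) : (if Even (c + c') then (-1:ℂ)^c else 0) * 2 = (-1:ℂ)^c + (-1:ℂ)^c' := by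
  rcases Nat.even_or_odd c with h1 | h1 <;> rcases Nat.even_or_odd c' with h2 | h2
  · rw [if_pos (h1.add h2), h1.neg_one_pow, h2.neg_one_pow]; norm_num
  · rw [if_neg (Nat.not_even_iff_odd.mpr (h1.add_odd h2)), h1.neg_one_pow, h2.neg_one_pow]; norm_num
  · rw [if_neg (Nat.not_even_iff_odd.mpr (h1.add_even h2)), h1.neg_one_pow, h2.neg_one_pow]; norm_num
  · rw [if_pos (h1.add_odd h2), h1.neg_one_pow, h2.neg_one_pow]; norm_num

lemma keySum (N : ℕ) (t : Fin N → Fin 2) :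
    ∑ T ∈ Finset.univ.powerset.filter (fun T : Finset (Fin N) => Even T.card),
      (-1:ℂ) ^ ((T.filter fun i => t i = 1).card)
    = ((if ∀ i, t i = 0 then (2:ℂ)^N else 0) + (if ∀ i, t i = 1 then (2:ℂ)^N else 0)) / 2 := by
  rw [eq_div_iff (by norm_num : (2:ℂ) ≠ 0)]
  rw [Finset.sum_filter, Finset.sum_mul]
  have step : ∀ T ∈ Finset.univ.powerset,
      (if Even T.card then (-1:ℂ) ^ ((T.filter fun i => t i = 1).card) else 0) * 2
      = (-1:ℂ) ^ ((T.filter fun i => t i = 1).card)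
        + (-1:ℂ) ^ ((T.filter fun i => ¬ t i = 1).card) := by
    intro T _
    have hc : (T.filter fun i => t i = 1).card + (T.filter fun i => ¬ t i = 1).card = T.card :=
      Finset.card_filter_add_card_filter_not _
    have := par ((T.filter fun i => t i = 1).card) ((T.filter fun i => ¬ t i = 1).card)
    rwa [hc] at this
  rw [Finset.sum_congr rfl step, Finset.sum_add_distrib]
  congr 1
  · have h1 : ∀ T : Finset (Fin N), (-1:ℂ) ^ ((T.filter fun i => t i = 1).card)
        = (∏ i ∈ T, (if t i = 1 then (-1:ℂ) else 1)) * ∏ i ∈ Finset.univ \ T, (1:ℂ) := by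
      intro T
      rw [Finset.prod_ite, Finset.prod_const, Finset.prod_const, Finset.prod_const]
      simp
    rw [Finset.sum_congr rfl (fun T _ => h1 T), ← Finset.prod_add]
    by_cases h : ∀ i, t i = 0
    · rw [if_pos h]
      have h2 : ∀ i : Fin N, (if t i = 1 then (-1:ℂ) else 1) + 1 = 2 := by
        intro i; rw [if_neg (by rw [h i]; decide)]; norm_num
      rw [Finset.prod_congr rfl (fun i _ => h2 i), Finset.prod_const]
      simp
    · rw [if_neg h]
      push_neg at h
      obtain ⟨i, hi⟩ := h
      have hi1 : t i = 1 := (fin2cases (t i)).resolve_left hi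
      apply Finset.prod_eq_zero (Finset.mem_univ i)
      rw [if_pos hi1]; ring
  · have h1 : ∀ T : Finset (Fin N), (-1:ℂ) ^ ((T.filter fun i => ¬ t i = 1).card)
        = (∏ i ∈ T, (if t i = 1 then (1:ℂ) else -1)) * ∏ i ∈ Finset.univ \ T, (1:ℂ) := by
      intro T
      rw [Finset.prod_ite, Finset.prod_const, Finset.prod_const, Finset.prod_const]
      simp
    rw [Finset.sum_congr rfl (fun T _ => h1 T), ← Finset.prod_add]
    by_cases h : ∀ i, t i = 1
    · rw [if_pos h]
      have h2 : ∀ i : Fin N, (if t i = 1 then (1:ℂ) else -1) + 1 = 2 := by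
        intro i; rw [if_pos (h i)]; norm_num
      rw [Finset.prod_congr rfl (fun i _ => h2 i), Finset.prod_const]
      simp
    · rw [if_neg h]
      push_neg at h
      obtain ⟨i, hi⟩ := h
      apply Finset.prod_eq_zero (Finset.mem_univ i)
      rw [if_neg hi]; ring

lemma pow_pred (N : ℕ) (hN : 1 ≤ N) : (2:ℂ)^N = 2^(N-1) * 2 := by
  rw [← pow_succ]; congr 1; omega

lemma eCard (N : ℕ) (hN : 1 ≤ N) :
    ((Finset.univ.powerset.filter (fun T : Finset (Fin N) => Even T.card)).card : ℂ)
      = 2^(N-1) := by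
  have h := keySum N (fun _ => 0)
  have h1 : ¬ (∀ i : Fin N, (0:Fin 2) = 1) := fun h => absurd (h ⟨0, hN⟩) (by decide)
  simp only [if_pos (fun i => rfl), if_neg h1, add_zero] at h
  have h2 : ∀ T : Finset (Fin N),
      (-1:ℂ) ^ ((T.filter fun _ => (0:Fin 2) = 1).card) = 1 := by
    intro T
    rw [Finset.filter_false_of_mem (fun x _ => by decide)]
    simp
  rw [Finset.sum_congr rfl (fun T _ => h2 T), Finset.sum_const, nsmul_eq_mul, mul_one] at h
  rw [h, pow_pred N hN]
  field_simp
  simp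

/-- Homogeneity of the GHZ verification operator: with `P_Z` the projector onto
`span{|0…0⟩, |1…1⟩}` and `P_{XY}` the projectors onto the `+1` eigenspaces of
the `2^{N−1}` XY-type stabilizers of the `N`-qubit GHZ state (products of X's
and Y's with an even number of Y's, indexed by the Y-position sets `T`),
`Ω = (1/3) P_Z + (2/3) · 2^{−(N−1)} Σ_{XY} P_{XY}
   = |GHZ⟩⟨GHZ| + (1/3)(I − |GHZ⟩⟨GHZ|) = (2/3)|GHZ⟩⟨GHZ| + (1/3) I`. -/
theorem ghz_verification_operator_homogeneous (N : ℕ) (hN : 1 ≤ N) :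
    (1 / 3 : ℂ) • pZ N +
      (2 / 3 : ℂ) • (((2 : ℂ) ^ (N - 1))⁻¹ •
        ∑ T ∈ Finset.univ.powerset.filter (fun T : Finset (Fin N) => Even T.card),
          xyProj N T) =
    (2 / 3 : ℂ) • ghzProj N + (1 / 3 : ℂ) • (1 : Matrix (Fin N → Fin 2) (Fin N → Fin 2) ℂ) := by
  set E := Finset.univ.powerset.filter (fun T : Finset (Fin N) => Even T.card) with hE
  have hpow : (2:ℂ)^(N-1) ≠ 0 := pow_ne_zero _ (by norm_num)
  ext s t
  have hsum : (∑ T ∈ E, xyProj N T) s t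
      = (1/2 : ℂ) * ((if s = t then (2:ℂ)^(N-1) else 0)
        + (if s = (fun i => t i + 1) then
            ((if ∀ i, t i = 0 then (2:ℂ)^N else 0) + (if ∀ i, t i = 1 then (2:ℂ)^N else 0)) / 2
          else 0)) := by
    rw [Matrix.sum_apply]
    have step : ∀ T ∈ E, xyProj N T s t
        = (1/2 : ℂ) * (if s = t then 1 else 0)
          + (1/2 : ℂ) * (if s = (fun i => t i + 1)
              then (-1:ℂ) ^ ((T.filter fun i => t i = 1).card) else 0) := by
      intro T _
      simp [xyProj, xyStab, Matrix.add_apply, Matrix.smul_apply, Matrix.one_apply, mul_add]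
    rw [Finset.sum_congr rfl step, Finset.sum_add_distrib, ← Finset.mul_sum, ← Finset.mul_sum,
      ← mul_add]
    congr 1
    congr 1
    · split_ifs with h
      · rw [Finset.sum_const, nsmul_eq_mul, mul_one]; exact eCard N hN
      · simp
    · by_cases h : s = (fun i => t i + 1)
      · rw [if_pos h, Finset.sum_congr rfl (fun T _ => if_pos h)]; exact keySum N t
      · rw [if_neg h, Finset.sum_congr rfl (fun T _ => if_neg h), Finset.sum_const, smul_zero]
  simp only [Matrix.add_apply, Matrix.smul_apply, smul_eq_mul, Matrix.one_apply, pZ, ghzProj, hsum]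
  have fin2flip : ∀ x : Fin 2, x ≠ x + 1 := by decide
  have f01 : (0:Fin 2) + 1 = 1 := by decide
  have f10 : (1:Fin 2) + 1 = 0 := by decide
  by_cases hst : s = t
  · subst hst
    have hfl : ¬ (s = fun i => s i + 1) := fun h => fin2flip (s ⟨0, hN⟩) (congrFun h ⟨0, hN⟩)
    rw [if_neg hfl, if_pos rfl, if_pos rfl]
    by_cases hA : (∀ i, s i = 0) ∨ (∀ i, s i = 1)
    · rw [if_pos ⟨rfl, hA⟩, if_pos ⟨hA, hA⟩]
      field_simp
      ring
    · rw [if_neg (fun h => hA h.2), if_neg (fun h => hA h.1)]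
      field_simp
      ring
  · rw [if_neg (fun h : _ ∧ _ => hst h.1)]
    simp only [if_neg hst]
    by_cases hfl : s = (fun i => t i + 1)
    · rw [if_pos hfl]
      by_cases hB0 : ∀ i, t i = 0
      · have hB1 : ¬ ∀ i, t i = 1 := fun h => by
          have := (hB0 ⟨0, hN⟩).symm.trans (h ⟨0, hN⟩); exact absurd this (by decide)
        have hA1 : ∀ i, s i = 1 := fun i => by rw [congrFun hfl i, hB0 i, f01]
        rw [if_pos hB0, if_neg hB1, if_pos ⟨Or.inr hA1, Or.inl hB0⟩]
        rw [pow_pred N hN]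
        field_simp
        ring
      · by_cases hB1 : ∀ i, t i = 1
        · have hA0 : ∀ i, s i = 0 := fun i => by rw [congrFun hfl i, hB1 i, f10]
          rw [if_neg hB0, if_pos hB1, if_pos ⟨Or.inl hA0, Or.inr hB1⟩]
          rw [pow_pred N hN]
          field_simp
          ring
        · rw [if_neg hB0, if_neg hB1, if_neg (fun h => by
            rcases h.2 with h2 | h2
            · exact hB0 h2
            · exact hB1 h2)]
          simp
    · rw [if_neg hfl]
      have hAB : ¬ (((∀ i, s i = 0) ∨ (∀ i, s i = 1)) ∧ ((∀ i, t i = 0) ∨ (∀ i, t i = 1))) := by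
        rintro ⟨hA | hA, hB | hB⟩
        · exact hst (funext fun i => (hA i).trans (hB i).symm)
        · exact hfl (funext fun i => by rw [hA i, hB i, f10])
        · exact hfl (funext fun i => by rw [hA i, hB i, f01])
        · exact hst (funext fun i => (hA i).trans (hB i).symm)
      rw [if_neg hAB]
      simp
end
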